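/- arXiv:1706.05671 — 2 statements merged into one kernel-verified Lean document; each statement's English description precedes it below -/
import Mathlib

section
/- Suppose H = ℝ and hypotheses (H) hold, and let (x_k) be generated by (IFB)_α with α = 3. Then the sequence (x_k) converges, as k → +∞, to a point of S = argmin Θ; that is, there exists x* ∈ S with x_k → x*. -/
open Set intervalIntegral Filter Topology

private lemma conv_grad (Φ : ℝ → ℝ) (hc : ConvexOn ℝ Set.univ Φ) (hd : Differentiable ℝ Φ) (a b : ℝ) :
    Φ a + deriv Φ a * (b - a) ≤ Φ b := by
  rcases lt_trichotomy a b with h | h | h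
  · have := hc.deriv_le_slope (mem_univ a) (mem_univ b) h (hd a)
    rw [slope_def_field] at this
    have hba : (0:ℝ) < b - a := by linarith
    rw [le_div_iff₀ hba] at this
    linarith
  · simp [h]
  · have := hc.slope_le_deriv (mem_univ b) (mem_univ a) h (hd a)
    rw [slope_def_field] at this
    have hba : (0:ℝ) < a - b := by linarith
    rw [div_le_iff₀ hba] at this
    linarith


private lemma descent_lemma (Φ : ℝ → ℝ) (hd : Differentiable ℝ Φ) (L : ℝ)
    (hlip : ∀ u v : ℝ, |deriv Φ u - deriv Φ v| ≤ L * |u - v|) (a b : ℝ) :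
    Φ b ≤ Φ a + deriv Φ a * (b - a) + L / 2 * (b - a) ^ 2 := by
  have hL : 0 ≤ L := by
    have := hlip 0 1
    have h1 : (0:ℝ) ≤ |deriv Φ 0 - deriv Φ 1| := abs_nonneg _
    simp at this
    linarith
  have hder : ∀ t : ℝ, HasDerivAt (fun t : ℝ => Φ (a + t * (b - a)))
      (deriv Φ (a + t * (b - a)) * (b - a)) t := by
    intro t
    have h1 : HasDerivAt (fun t : ℝ => a + t * (b - a)) (b - a) t := by
      simpa using ((hasDerivAt_id t).mul_const (b - a)).const_add a
    exact ((hd _).hasDerivAt.comp t h1)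
  have hcont : Continuous (deriv Φ) := by
    have hlw : LipschitzWith (Real.toNNReal L) (deriv Φ) := by
      rw [lipschitzWith_iff_dist_le_mul]
      intro u v
      rw [Real.dist_eq, Real.dist_eq]
      have hco : L ≤ ((Real.toNNReal L : NNReal) : ℝ) := by
        simp [Real.coe_toNNReal', hL]
      exact (hlip u v).trans (mul_le_mul_of_nonneg_right hco (abs_nonneg _))
    exact hlw.continuous
  have hicont : Continuous (fun t : ℝ => deriv Φ (a + t * (b - a)) * (b - a)) := by
    fun_prop
  have hint : ∫ t in (0:ℝ)..1, deriv Φ (a + t * (b - a)) * (b - a) = Φ b - Φ a := by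
    have := intervalIntegral.integral_eq_sub_of_hasDerivAt
      (f := fun t : ℝ => Φ (a + t * (b - a)))
      (f' := fun t : ℝ => deriv Φ (a + t * (b - a)) * (b - a))
      (a := 0) (b := 1) (fun t _ => hder t)
      (hicont.intervalIntegrable 0 1)
    simpa using this
  have hbound : ∫ t in (0:ℝ)..1, deriv Φ (a + t * (b - a)) * (b - a)
      ≤ ∫ t in (0:ℝ)..1, (deriv Φ a * (b - a) + L * t * (b - a) ^ 2) := by
    apply intervalIntegral.integral_mono_on (by norm_num)
      (hicont.intervalIntegrable 0 1)
      ((by fun_prop : Continuous (fun t : ℝ => deriv Φ a * (b - a) + L * t * (b - a) ^ 2)).intervalIntegrable 0 1)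
    intro t ht
    rcases ht with ⟨ht0, ht1⟩
    have h2 : |deriv Φ (a + t * (b - a)) - deriv Φ a| ≤ L * |t * (b - a)| := by
      have := hlip (a + t * (b - a)) a
      simpa using this
    have h3 : deriv Φ (a + t * (b - a)) * (b - a) - deriv Φ a * (b - a)
        ≤ L * |t * (b - a)| * |b - a| := by
      have : (deriv Φ (a + t * (b - a)) - deriv Φ a) * (b - a) ≤ |deriv Φ (a + t * (b - a)) - deriv Φ a| * |b - a| := by
        calc (deriv Φ (a + t * (b - a)) - deriv Φ a) * (b - a)
            ≤ |(deriv Φ (a + t * (b - a)) - deriv Φ a) * (b - a)| := le_abs_self _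
          _ = |deriv Φ (a + t * (b - a)) - deriv Φ a| * |b - a| := abs_mul _ _
      nlinarith [mul_le_mul_of_nonneg_right h2 (abs_nonneg (b - a))]
    have h4 : L * |t * (b - a)| * |b - a| = L * t * (b - a) ^ 2 := by
      rw [abs_mul, abs_of_nonneg ht0, ← sq_abs]
      ring
    linarith
  have hval : ∫ t in (0:ℝ)..1, (deriv Φ a * (b - a) + L * t * (b - a) ^ 2)
      = deriv Φ a * (b - a) + L / 2 * (b - a) ^ 2 := by
    rw [intervalIntegral.integral_add
      (((by fun_prop : Continuous (fun _ : ℝ => deriv Φ a * (b - a)))).intervalIntegrable 0 1)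
      ((by fun_prop : Continuous (fun t : ℝ => L * t * (b - a) ^ 2)).intervalIntegrable 0 1)]
    have e1 : ∫ _t in (0:ℝ)..1, deriv Φ a * (b - a) = deriv Φ a * (b - a) := by simp
    have e2 : ∫ t in (0:ℝ)..1, L * t * (b - a) ^ 2 = L / 2 * (b - a) ^ 2 := by
      have : (fun t : ℝ => L * t * (b - a) ^ 2) = fun t : ℝ => (L * (b - a) ^ 2) * t := by
        funext t; ring
      rw [this, intervalIntegral.integral_const_mul, integral_id]
      ring
    rw [e1, e2]
  nlinarith [hbound.trans_eq hval, hint]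


private lemma prox_finite (Ψ : ℝ → EReal) (hΨbot : ∀ u : ℝ, Ψ u ≠ ⊥)
    (s : ℝ) (prox : ℝ → ℝ)
    (hprox : ∀ w ξ : ℝ,
      Ψ (prox w) + ((1 / (2 * s) * (prox w - w) ^ 2 : ℝ) : EReal) ≤
        Ψ ξ + ((1 / (2 * s) * (ξ - w) ^ 2 : ℝ) : EReal))
    (u₀ : ℝ) (hu₀ : Ψ u₀ ≠ ⊤) (w : ℝ) : Ψ (prox w) ≠ ⊤ := by
  intro htop
  have h := hprox w u₀
  rw [htop] at h
  have h1 : Ψ u₀ + ((1 / (2 * s) * (u₀ - w) ^ 2 : ℝ) : EReal) < ⊤ := by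
    have : Ψ u₀ < ⊤ := lt_of_le_of_ne le_top hu₀
    exact EReal.add_lt_top this.ne (EReal.coe_ne_top _)
  rw [EReal.top_add_coe] at h
  exact (not_le.2 h1) h


private lemma prox_subgrad (Ψ : ℝ → EReal) (hΨbot : ∀ u : ℝ, Ψ u ≠ ⊥)
    (hΨconv : ∀ u v : ℝ, ∀ a b : ℝ, 0 ≤ a → 0 ≤ b → a + b = 1 →
      Ψ (a * u + b * v) ≤ (a : EReal) * Ψ u + (b : EReal) * Ψ v)
    (s : ℝ) (hs : 0 < s) (prox : ℝ → ℝ)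
    (hprox : ∀ w ξ : ℝ,
      Ψ (prox w) + ((1 / (2 * s) * (prox w - w) ^ 2 : ℝ) : EReal) ≤
        Ψ ξ + ((1 / (2 * s) * (ξ - w) ^ 2 : ℝ) : EReal))
    (u₀ : ℝ) (hu₀ : Ψ u₀ ≠ ⊤) (w ξ : ℝ) (hξ : Ψ ξ ≠ ⊤) :
    (Ψ (prox w)).toReal ≤ (Ψ ξ).toReal + (1/s) * (prox w - w) * (ξ - prox w) := by
  set p := prox w with hp
  have hpfin : Ψ p ≠ ⊤ := prox_finite Ψ hΨbot s prox hprox u₀ hu₀ w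
  set P : ℝ := (Ψ p).toReal with hP
  set X : ℝ := (Ψ ξ).toReal with hX
  have hPc : Ψ p = (P : EReal) := (EReal.coe_toReal hpfin (hΨbot p)).symm
  have hXc : Ψ ξ = (X : EReal) := (EReal.coe_toReal hξ (hΨbot ξ)).symm
  -- main inequality for each λ ∈ (0,1]
  have key : ∀ lam : ℝ, 0 < lam → lam ≤ 1 →
      P ≤ X + (1/s) * (p - w) * (ξ - p) + lam / (2*s) * (ξ - p)^2 := by
    intro lam hl0 hl1
    have hconv := hΨconv p ξ (1 - lam) lam (by linarith) (by linarith) (by ring)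
    set ζ : ℝ := (1 - lam) * p + lam * ξ with hζ
    have hconv' : Ψ ζ ≤ (((1-lam) * P + lam * X : ℝ) : EReal) := by
      rw [hζ]
      refine hconv.trans_eq ?_
      rw [hPc, hXc]
      norm_cast
    have hζfin : Ψ ζ ≠ ⊤ := by
      intro h'; rw [h'] at hconv'
      exact (not_le.2 (EReal.coe_lt_top _)) hconv'
    have hζc : Ψ ζ = (((Ψ ζ).toReal : ℝ) : EReal) := (EReal.coe_toReal hζfin (hΨbot ζ)).symm
    set Z : ℝ := (Ψ ζ).toReal with hZ
    have hZle : Z ≤ (1-lam) * P + lam * X := by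
      rw [hζc] at hconv'; exact_mod_cast hconv'
    have hpz := hprox w ζ
    have hpzR : P + 1 / (2 * s) * (p - w) ^ 2 ≤ Z + 1 / (2 * s) * (ζ - w) ^ 2 := by
      rw [hPc, hζc] at hpz
      exact_mod_cast hpz
    -- ζ - w = (p - w) + lam * (ξ - p)
    have hzw : ζ - w = (p - w) + lam * (ξ - p) := by rw [hζ]; ring
    have hq : 1 / (2 * s) * (ζ - w) ^ 2 - 1 / (2 * s) * (p - w) ^ 2
        = lam / s * (p - w) * (ξ - p) + lam^2 / (2*s) * (ξ - p)^2 := by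
      rw [hzw]; field_simp; ring
    -- combine: lam * P ≤ lam * X + lam/s (p-w)(ξ-p) + lam²/(2s)(ξ-p)²
    have hcomb : lam * P ≤ lam * X + lam / s * (p - w) * (ξ - p) + lam^2 / (2*s) * (ξ - p)^2 := by
      nlinarith [hZle, hpzR, hq]
    have := mul_le_mul_of_nonneg_left hcomb (le_of_lt (by positivity : (0:ℝ) < 1/lam))
    have hlam : (1/lam) * lam = 1 := by field_simp
    calc P = (1/lam) * (lam * P) := by field_simp
      _ ≤ (1/lam) * (lam * X + lam / s * (p - w) * (ξ - p) + lam^2 / (2*s) * (ξ - p)^2) := this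
      _ = X + (1/s) * (p - w) * (ξ - p) + lam / (2*s) * (ξ - p)^2 := by field_simp
  -- let lam → 0
  refine le_of_forall_pos_le_add ?_
  intro ε hε
  rcases eq_or_ne (ξ - p) 0 with h0 | h0
  · have := key 1 one_pos le_rfl
    rw [h0] at this ⊢
    simp at this ⊢
    linarith [this]
  · set lam := min 1 (2 * s * ε / (ξ - p)^2) with hlam
    have hsq : 0 < (ξ - p)^2 := by positivity
    have hl0 : 0 < lam := lt_min one_pos (by positivity)
    have hl1 : lam ≤ 1 := min_le_left _ _
    have := key lam hl0 hl1
    have hle : lam / (2*s) * (ξ - p)^2 ≤ ε := by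
      have h2 : lam ≤ 2 * s * ε / (ξ - p)^2 := min_le_right _ _
      rw [div_mul_eq_mul_div, div_le_iff₀ (by positivity : (0:ℝ) < 2*s)]
      calc lam * (ξ - p)^2 ≤ (2 * s * ε / (ξ - p)^2) * (ξ - p)^2 :=
            mul_le_mul_of_nonneg_right h2 (le_of_lt hsq)
        _ = ε * (2*s) := by field_simp
    linarith


private lemma one_step (Φ : ℝ → ℝ) (hΦconv : ConvexOn ℝ Set.univ Φ) (hΦdiff : Differentiable ℝ Φ)
    (L : ℝ) (hL : 0 < L)
    (hlip : ∀ u v : ℝ, |deriv Φ u - deriv Φ v| ≤ L * |u - v|)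
    (Ψ : ℝ → EReal) (hΨbot : ∀ u : ℝ, Ψ u ≠ ⊥)
    (hΨconv : ∀ u v : ℝ, ∀ a b : ℝ, 0 ≤ a → 0 ≤ b → a + b = 1 →
      Ψ (a * u + b * v) ≤ (a : EReal) * Ψ u + (b : EReal) * Ψ v)
    (s : ℝ) (hs : 0 < s) (hsL : s ≤ 1 / L)
    (prox : ℝ → ℝ)
    (hprox : ∀ w ξ : ℝ,
      Ψ (prox w) + ((1 / (2 * s) * (prox w - w) ^ 2 : ℝ) : EReal) ≤
        Ψ ξ + ((1 / (2 * s) * (ξ - w) ^ 2 : ℝ) : EReal))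
    (u₀ : ℝ) (hu₀ : Ψ u₀ ≠ ⊤) (yk ξ : ℝ) (hξ : Ψ ξ ≠ ⊤) :
    Φ (prox (yk - s * deriv Φ yk)) + (Ψ (prox (yk - s * deriv Φ yk))).toReal ≤
      Φ ξ + (Ψ ξ).toReal + 1/(2*s) * ((ξ - yk)^2 - (ξ - prox (yk - s * deriv Φ yk))^2) := by
  set g := deriv Φ yk with hg
  set p := prox (yk - s * g) with hp
  have hsub := prox_subgrad Ψ hΨbot hΨconv s hs prox hprox u₀ hu₀ (yk - s * g) ξ hξ
  rw [← hp] at hsub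
  have hdesc := descent_lemma Φ hΦdiff L hlip yk p
  have hconv := conv_grad Φ hΦconv hΦdiff yk ξ
  rw [← hg] at hdesc hconv
  have hLs : L / 2 * (p - yk)^2 ≤ 1/(2*s) * (p - yk)^2 := by
    have h1 : L ≤ 1 / s := by
      rw [le_div_iff₀ hs]
      calc L * s ≤ L * (1/L) := by
            exact mul_le_mul_of_nonneg_left hsL (le_of_lt hL)
        _ = 1 := by field_simp
    have h2 : (1:ℝ)/(2*s) = (1/s)/2 := by field_simp
    exact mul_le_mul_of_nonneg_right (by linarith : L/2 ≤ 1/(2*s)) (sq_nonneg (p - yk))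
  have hexp : (1/s) * (p - (yk - s * g)) * (ξ - p)
      = (1/s) * (p - yk) * (ξ - p) + g * (ξ - p) := by field_simp; ring
  have halg : 1/(2*s) * (p - yk)^2 + (1/s) * (p - yk) * (ξ - p)
      = 1/(2*s) * ((ξ - yk)^2 - (ξ - p)^2) := by field_simp; ring
  nlinarith [hsub, hdesc, hconv, hLs, hexp, halg]


set_option maxHeartbeats 1000000 in
/-- in dimension one, under hypotheses (H) with `α = 3`, the
iterates of `(IFB)_3` converge to a minimizer of `Θ`. -/
theorem stmt_18
    (Φ : ℝ → ℝ) (hΦconv : ConvexOn ℝ Set.univ Φ) (hΦdiff : Differentiable ℝ Φ)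
    (L : ℝ) (hL : 0 < L)
    (hlip : ∀ u v : ℝ, ‖deriv Φ u - deriv Φ v‖ ≤ L * ‖u - v‖)
    (Ψ : ℝ → EReal)
    (hΨbot : ∀ u : ℝ, Ψ u ≠ ⊥) (hΨproper : ∃ u : ℝ, Ψ u ≠ ⊤)
    (hΨconv : ∀ u v : ℝ, ∀ a b : ℝ, 0 ≤ a → 0 ≤ b → a + b = 1 →
      Ψ (a * u + b * v) ≤ (a : EReal) * Ψ u + (b : EReal) * Ψ v)
    (hΨlsc : LowerSemicontinuous Ψ)
    (Θ : ℝ → EReal) (hΘ : ∀ u : ℝ, Θ u = (Φ u : EReal) + Ψ u)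
    (hSne : ∃ z : ℝ, ∀ u : ℝ, Θ z ≤ Θ u)
    (s : ℝ) (hs : 0 < s) (hsL : s ≤ 1 / L)
    (prox : ℝ → ℝ)
    (hprox : ∀ w ξ : ℝ,
      Ψ (prox w) + ((1 / (2 * s) * (prox w - w) ^ 2 : ℝ) : EReal) ≤
        Ψ ξ + ((1 / (2 * s) * (ξ - w) ^ 2 : ℝ) : EReal))
    (x y : ℕ → ℝ)
    (hy : ∀ k : ℕ, 1 ≤ k → y k = x k + (1 - 3 / (k : ℝ)) * (x k - x (k - 1)))
    (hrec : ∀ k : ℕ, 1 ≤ k → x (k + 1) = prox (y k - s * deriv Φ (y k))) :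
    ∃ xs : ℝ, (∀ u : ℝ, Θ xs ≤ Θ u) ∧
      Filter.Tendsto x Filter.atTop (nhds xs) := by
  classical
  obtain ⟨zs, hzs⟩ := hSne
  obtain ⟨u₀, hu₀⟩ := hΨproper
  have hlipR : ∀ u v : ℝ, |deriv Φ u - deriv Φ v| ≤ L * |u - v| := by
    intro u v; have := hlip u v; simpa [Real.norm_eq_abs] using this
  obtain ⟨ψ, hψdef⟩ : ∃ ψf : ℝ → ℝ, ∀ u, ψf u = (Ψ u).toReal := ⟨_, fun _ => rfl⟩
  -- zs has finite Ψ
  have hzfin : Ψ zs ≠ ⊤ := by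
    intro h
    have h1 := hzs u₀
    rw [hΘ zs, hΘ u₀, h] at h1
    have h2 : ((Φ zs : ℝ) : EReal) + ⊤ = ⊤ := by simp
    rw [h2] at h1
    exact (not_le.2 (EReal.add_lt_top (EReal.coe_ne_top _) hu₀)) h1
  obtain ⟨mR, hmRdef⟩ : ∃ m : ℝ, m = Φ zs + ψ zs := ⟨_, rfl⟩
  have hΘcoe : ∀ u : ℝ, Ψ u ≠ ⊤ → Θ u = ((Φ u + ψ u : ℝ) : EReal) := by
    intro u hu
    rw [hΘ u, hψdef u, show Ψ u = (((Ψ u).toReal : ℝ) : EReal) from (EReal.coe_toReal hu (hΨbot u)).symm]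
    norm_cast
  have hmin : ∀ u : ℝ, Ψ u ≠ ⊤ → mR ≤ Φ u + ψ u := by
    intro u hu
    have h1 := hzs u
    rw [hΘcoe zs hzfin, hΘcoe u hu] at h1
    rw [hmRdef]
    exact_mod_cast h1
  have hxfin : ∀ k : ℕ, 2 ≤ k → Ψ (x k) ≠ ⊤ := by
    intro k hk
    obtain ⟨j, rfl⟩ := Nat.exists_eq_add_of_le hk
    rw [show 2 + j = (j+1) + 1 by omega, hrec (j+1) (by omega)]
    exact prox_finite Ψ hΨbot s prox hprox u₀ hu₀ _
  obtain ⟨w, hwdef⟩ : ∃ wf : ℕ → ℝ, ∀ k, wf k = Φ (x k) + ψ (x k) - mR := ⟨_, fun _ => rfl⟩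
  have hwnn : ∀ k : ℕ, 2 ≤ k → 0 ≤ w k := by
    intro k hk
    have h1 : mR ≤ Φ (x k) + ψ (x k) := hmin _ (hxfin k hk)
    rw [hwdef]
    linarith
  obtain ⟨A, hAdef⟩ : ∃ Af : ℕ → ℝ, ∀ k, Af k = x k + ((k : ℝ) - 3)/2 * (x k - x (k-1)) := ⟨_, fun _ => rfl⟩
  obtain ⟨E, hEdef⟩ : ∃ Ef : ℝ → ℕ → ℝ, ∀ z k, Ef z k = s/2 * ((k:ℝ)-1)^2 * w k + (A k - z)^2 := ⟨_, fun _ _ => rfl⟩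
  have hstep : ∀ k : ℕ, 1 ≤ k → ∀ ξ : ℝ, Ψ ξ ≠ ⊤ →
      Φ (x (k+1)) + ψ (x (k+1)) ≤ Φ ξ + ψ ξ + 1/(2*s) * ((ξ - y k)^2 - (ξ - x (k+1))^2) := by
    intro k hk ξ hξ
    rw [hrec k hk]
    simp only [hψdef]
    exact one_step Φ hΦconv hΦdiff L hL hlipR Ψ hΨbot hΨconv s hs hsL prox hprox u₀ hu₀ (y k) ξ hξ
  have hKEY : ∀ z : ℝ, Ψ z ≠ ⊤ → Φ z + ψ z = mR → ∀ k : ℕ, 2 ≤ k →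
      E z (k+1) + s/2 * w k ≤ E z k := by
    intro z hzf hzv k hk
    have hk1 : 1 ≤ k := le_trans (by norm_num) hk
    have hkR : (2:ℝ) ≤ (k:ℝ) := by exact_mod_cast hk
    have hkpos : (0:ℝ) < (k:ℝ) := by linarith
    obtain ⟨aa, haa⟩ : ∃ a : ℝ, a = 1 - 2/(k:ℝ) := ⟨_, rfl⟩
    obtain ⟨bb, hbb⟩ : ∃ b : ℝ, b = 2/(k:ℝ) := ⟨_, rfl⟩
    have haa0 : 0 ≤ aa := by
      rw [haa, sub_nonneg, div_le_one hkpos]; linarith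
    have hbb0 : 0 ≤ bb := by rw [hbb]; positivity
    have hab : aa + bb = 1 := by rw [haa, hbb]; ring
    obtain ⟨zmix, hzmix⟩ : ∃ zm : ℝ, zm = aa * x k + bb * z := ⟨_, rfl⟩
    have hcΦ : Φ zmix ≤ aa * Φ (x k) + bb * Φ z := by
      have := hΦconv.2 (Set.mem_univ (x k)) (Set.mem_univ z) haa0 hbb0 hab
      rw [hzmix]
      simpa [smul_eq_mul] using this
    have hcΨE := hΨconv (x k) z aa bb haa0 hbb0 hab
    rw [← hzmix] at hcΨE
    have hxkfin := hxfin k hk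
    have hxkc : Ψ (x k) = ((ψ (x k) : ℝ) : EReal) := by
      rw [hψdef]; exact (EReal.coe_toReal hxkfin (hΨbot _)).symm
    have hzc : Ψ z = ((ψ z : ℝ) : EReal) := by
      rw [hψdef]; exact (EReal.coe_toReal hzf (hΨbot _)).symm
    have hcΨE' : Ψ zmix ≤ ((aa * ψ (x k) + bb * ψ z : ℝ) : EReal) := by
      refine hcΨE.trans_eq ?_
      rw [hxkc, hzc]; norm_cast
    have hzmixfin : Ψ zmix ≠ ⊤ := by
      intro h'; rw [h'] at hcΨE'; exact (not_le.2 (EReal.coe_lt_top _)) hcΨE'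
    have hcΨ : ψ zmix ≤ aa * ψ (x k) + bb * ψ z := by
      rw [hψdef zmix]
      rw [show Ψ zmix = (((Ψ zmix).toReal : ℝ):EReal) from (EReal.coe_toReal hzmixfin (hΨbot _)).symm] at hcΨE'
      have := EReal.coe_le_coe_iff.1 hcΨE'
      rw [hψdef, hψdef] at this ⊢
      exact this
    have H := hstep k hk1 zmix hzmixfin
    have hyk := hy k hk1
    have id1 : zmix - y k = (2/(k:ℝ)) * (z - A k) := by
      rw [hAdef, hzmix, hyk, haa, hbb]
      field_simp
      ring
    have id2 : zmix - x (k+1) = (2/(k:ℝ)) * (z - A (k+1)) := by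
      rw [hAdef, hzmix, haa, hbb, Nat.add_sub_cancel]
      push_cast
      field_simp
      ring
    set D : ℝ := (A k - z)^2 - (A (k+1) - z)^2 with hD
    have e1 : 1/(2*s) * ((zmix - y k)^2 - (zmix - x (k+1))^2) = 2/(s*(k:ℝ)^2) * D := by
      rw [id1, id2, hD]
      field_simp
      ring
    have e2 : aa * mR + bb * mR = mR := by rw [← add_mul, hab, one_mul]
    have e3 : bb * (Φ z) + bb * (ψ z) = bb * mR := by rw [← mul_add, hzv]
    have H3 : w (k+1) ≤ aa * w k + 2/(s*(k:ℝ)^2) * D := by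
      rw [hwdef, hwdef]
      have hexp : aa * (Φ (x k) + ψ (x k) - mR) = aa * Φ (x k) + aa * ψ (x k) - aa * mR := by ring
      linarith [H, hcΦ, hcΨ, e1, e2, e3, hexp]
    have H4 := mul_le_mul_of_nonneg_left H3 (le_of_lt (by positivity : (0:ℝ) < s*(k:ℝ)^2/2))
    have e4 : s*(k:ℝ)^2/2 * (aa*w k + 2/(s*(k:ℝ)^2)*D) = s/2*((k:ℝ)^2 - 2*(k:ℝ))*w k + D := by
      rw [haa]; field_simp
    rw [hEdef, hEdef]
    push_cast
    rw [hD] at e4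
    have e5 : s/2*((k:ℝ)+1-1)^2*w (k+1) = s*(k:ℝ)^2/2 * w (k+1) := by ring
    have e6 : s/2*((k:ℝ)-1)^2*w k = s/2*((k:ℝ)^2 - 2*(k:ℝ))*w k + s/2*w k := by ring
    linarith [H4, e4, e5, e6]
  have hEnn : ∀ z : ℝ, ∀ k : ℕ, 2 ≤ k → 0 ≤ E z k := by
    intro z k hk
    have h1 := hwnn k hk
    rw [hEdef]
    exact add_nonneg (mul_nonneg (mul_nonneg (by linarith) (sq_nonneg _)) h1) (sq_nonneg _)
  -- partial sums and monotonicity for a generic minimizer-anchor z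
  have hEanti : ∀ z : ℝ, Ψ z ≠ ⊤ → Φ z + ψ z = mR →
      (Antitone (fun n => E z (n+2)) ∧ ∀ n : ℕ, (∑ i ∈ Finset.range n, s/2 * w (i+2)) + E z (n+2) ≤ E z 2) := by
    intro z hzf hzv
    have hstep2 : ∀ n : ℕ, E z (n+3) + s/2 * w (n+2) ≤ E z (n+2) := by
      intro n
      have := hKEY z hzf hzv (n+2) (by omega)
      simpa [show n+2+1 = n+3 by omega] using this
    have hanti : Antitone (fun n => E z (n+2)) := by
      apply antitone_nat_of_succ_le
      intro n
      have h1 := hstep2 n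
      have h2 := hwnn (n+2) (by omega)
      have h3 : (0:ℝ) ≤ s/2 * w (n+2) := mul_nonneg (by linarith) h2
      calc E z (n+1+2) = E z (n+3) := by norm_num
        _ ≤ E z (n+2) := by linarith
    refine ⟨hanti, ?_⟩
    intro n
    induction n with
    | zero => simp
    | succ n ih =>
      rw [Finset.sum_range_succ]
      have h1 := hstep2 n
      have : E z (n+1+2) = E z (n+3) := by norm_num
      linarith
  have hwto0 : Tendsto w atTop (nhds 0) := by
    obtain ⟨-, hPS⟩ := hEanti zs hzfin hmRdef.symm
    have hsum : Summable (fun n => s/2 * w (n+2)) := by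
      apply summable_of_sum_range_le (c := E zs 2)
      · intro n; exact mul_nonneg (by linarith) (hwnn _ (by omega))
      · intro n
        have h1 := hPS n
        have h2 := hEnn zs (n+2) (by omega)
        linarith
    have hsum2 : Summable (fun n => w (n+2)) := by
      refine (hsum.mul_left (2/s)).congr (fun n => ?_)
      field_simp
    have h3 : Tendsto (fun n => w (n+2)) atTop (nhds 0) := hsum2.tendsto_atTop_zero
    exact (tendsto_add_atTop_iff_nat 2).1 h3
  obtain ⟨Ca, hCa0, hAbd⟩ : ∃ Ca : ℝ, 0 ≤ Ca ∧ ∀ k : ℕ, 2 ≤ k → |A k - zs| ≤ Ca := by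
    obtain ⟨hanti, -⟩ := hEanti zs hzfin hmRdef.symm
    refine ⟨Real.sqrt (E zs 2), Real.sqrt_nonneg _, ?_⟩
    intro k hk
    obtain ⟨j, rfl⟩ := Nat.exists_eq_add_of_le hk
    have h1 : E zs (2+j) ≤ E zs 2 := by
      have := hanti (Nat.zero_le j)
      simpa [Nat.add_comm] using this
    have h2 : (A (2+j) - zs)^2 ≤ E zs (2+j) := by
      rw [hEdef]
      have h3 := hwnn (2+j) (by omega)
      have h4 : (0:ℝ) ≤ s/2 * (((2+j:ℕ):ℝ)-1)^2 * w (2+j) :=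
        mul_nonneg (mul_nonneg (by linarith) (sq_nonneg _)) h3
      linarith
    calc |A (2+j) - zs| = Real.sqrt ((A (2+j) - zs)^2) := (Real.sqrt_sq_eq_abs _).symm
      _ ≤ Real.sqrt (E zs 2) := Real.sqrt_le_sqrt (by linarith)
  obtain ⟨C, hCge, hxbd⟩ : ∃ C : ℝ, Ca ≤ C ∧ ∀ k : ℕ, 2 ≤ k → |x k - zs| ≤ C := by
    refine ⟨max (|x 2 - zs|) Ca, le_max_right _ _, ?_⟩
    intro k hk
    induction k, hk using Nat.le_induction with
    | base => exact le_max_left _ _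
    | succ k hk ih =>
      have hk2 : (2:ℝ) ≤ (k:ℝ) := by exact_mod_cast hk
      have hid : (k:ℝ) * (x (k+1) - zs) = ((k:ℝ)-2) * (x k - zs) + 2*(A (k+1) - zs) := by
        rw [hAdef (k+1)]
        simp only [Nat.add_sub_cancel]
        push_cast
        ring
      have h1 : |((k:ℝ)-2) * (x k - zs)| ≤ ((k:ℝ)-2) * (max (|x 2 - zs|) Ca) := by
        rw [abs_mul, abs_of_nonneg (by linarith : (0:ℝ) ≤ (k:ℝ)-2)]
        exact mul_le_mul_of_nonneg_left ih (by linarith)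
      have h2 : |2*(A (k+1) - zs)| ≤ 2 * (max (|x 2 - zs|) Ca) := by
        rw [abs_mul, abs_two]
        exact mul_le_mul_of_nonneg_left ((hAbd (k+1) (by omega)).trans (le_max_right _ _)) (by norm_num)
      have h3 : |(k:ℝ) * (x (k+1) - zs)| ≤ (k:ℝ) * (max (|x 2 - zs|) Ca) := by
        rw [hid]
        calc |((k:ℝ)-2) * (x k - zs) + 2*(A (k+1) - zs)|
            ≤ |((k:ℝ)-2) * (x k - zs)| + |2*(A (k+1) - zs)| := abs_add_le _ _
          _ ≤ ((k:ℝ)-2) * (max (|x 2 - zs|) Ca) + 2 * (max (|x 2 - zs|) Ca) := add_le_add h1 h2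
          _ = (k:ℝ) * (max (|x 2 - zs|) Ca) := by ring
      rw [abs_mul, abs_of_nonneg (by linarith : (0:ℝ) ≤ (k:ℝ))] at h3
      exact le_of_mul_le_mul_left h3 (by linarith)
  have hdto0 : Tendsto (fun k : ℕ => x k - x (k-1)) atTop (nhds 0) := by
    have hb : ∀ k : ℕ, 4 ≤ k → |x k - x (k-1)| ≤ 2*(Ca + C)/((k:ℝ) - 3) := by
      intro k hk
      have hk4 : (4:ℝ) ≤ (k:ℝ) := by exact_mod_cast hk
      have hAk := hAbd k (by omega)
      have hxk := hxbd k (by omega)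
      have hid : ((k:ℝ)-3)/2 * (x k - x (k-1)) = (A k - zs) - (x k - zs) := by
        rw [hAdef]; ring
      have h1 : |((k:ℝ)-3)/2 * (x k - x (k-1))| ≤ Ca + C := by
        rw [hid]
        calc |(A k - zs) - (x k - zs)| ≤ |A k - zs| + |x k - zs| := abs_sub _ _
          _ ≤ Ca + C := add_le_add hAk hxk
      rw [abs_mul, abs_of_nonneg (by linarith : (0:ℝ) ≤ ((k:ℝ)-3)/2)] at h1
      rw [le_div_iff₀ (by linarith : (0:ℝ) < (k:ℝ)-3)]
      nlinarith [abs_nonneg (x k - x (k-1))]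
    have hg : Tendsto (fun k : ℕ => 2*(Ca+C)/((k:ℝ)-3)) atTop (nhds 0) := by
      apply Tendsto.div_atTop (tendsto_const_nhds)
      have h2 : Tendsto (fun k : ℕ => (k:ℝ) + (-3)) atTop atTop :=
        tendsto_atTop_add_const_right _ _ tendsto_natCast_atTop_atTop
      simpa [sub_eq_add_neg] using h2
    apply squeeze_zero_norm' ?_ hg
    filter_upwards [eventually_ge_atTop 4] with k hk
    simpa [Real.norm_eq_abs] using hb k hk
  -- boundedness
  have hble : IsBoundedUnder (· ≤ ·) atTop x := by
    refine ⟨zs + C, eventually_map.2 ?_⟩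
    filter_upwards [eventually_ge_atTop 2] with k hk
    have := hxbd k hk; have := abs_le.1 this; linarith [this.2]
  have hbge : IsBoundedUnder (· ≥ ·) atTop x := by
    refine ⟨zs - C, eventually_map.2 ?_⟩
    filter_upwards [eventually_ge_atTop 2] with k hk
    have := abs_le.1 (hxbd k hk); linarith [this.1]
  set c : ℝ := liminf x atTop with hcdef
  set dd : ℝ := limsup x atTop with hddef
  have hcd : c ≤ dd := liminf_le_limsup hble hbge
  have hfreqc : ∀ ε : ℝ, 0 < ε → ∃ᶠ k in atTop, |x k - c| < ε := by
    intro ε hε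
    have h1 : ∃ᶠ k in atTop, x k < c + ε :=
      frequently_lt_of_liminf_lt hble.isCoboundedUnder_ge (by rw [← hcdef]; linarith)
    have h2 : ∀ᶠ k in atTop, c - ε < x k :=
      eventually_lt_of_lt_liminf (by rw [← hcdef]; linarith) hbge
    refine (h1.and_eventually h2).mono ?_
    rintro k ⟨hk1, hk2⟩
    rw [abs_lt]
    constructor <;> linarith
  have hfreqd : ∀ ε : ℝ, 0 < ε → ∃ᶠ k in atTop, |x k - dd| < ε := by
    intro ε hε
    have h1 : ∃ᶠ k in atTop, dd - ε < x k :=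
      frequently_lt_of_lt_limsup hbge.isCoboundedUnder_le (by rw [← hddef]; linarith)
    have h2 : ∀ᶠ k in atTop, x k < dd + ε :=
      eventually_lt_of_limsup_lt (by rw [← hddef]; linarith) hble
    refine (h1.and_eventually h2).mono ?_
    rintro k ⟨hk1, hk2⟩
    rw [abs_lt]
    constructor <;> linarith
  have hlimS : ∀ e : ℝ, (∀ ε : ℝ, 0 < ε → ∃ᶠ k in atTop, |x k - e| < ε) →
      Ψ e ≠ ⊤ ∧ Φ e + ψ e ≤ mR := by
    intro e hfe
    have key : ∀ r : ℝ, (r : EReal) < Ψ e → Φ e + r ≤ mR := by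
      intro r hr
      obtain ⟨δ, hδ0, hδ⟩ := Metric.eventually_nhds_iff.1 (hΨlsc e (r : EReal) hr)
      refine le_of_forall_pos_le_add ?_
      intro ε hε
      obtain ⟨δ', hδ'0, hδ'⟩ := Metric.continuousAt_iff.1 hΦdiff.continuous.continuousAt (ε/2) (by linarith)
      have hwev : ∀ᶠ k in atTop, w k < ε/2 := hwto0.eventually_lt_const (by linarith)
      have hfk := (hfe (min δ δ') (lt_min hδ0 hδ'0)).and_eventually (hwev.and (eventually_ge_atTop 2))
      obtain ⟨k, hk1, hk2, hk3⟩ := hfk.exists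
      have hdist : dist (x k) e < δ := by
        rw [Real.dist_eq]; exact hk1.trans_le (min_le_left _ _)
      have hr1 : (r:EReal) < Ψ (x k) := hδ hdist
      have hfin := hxfin k hk3
      have hr2 : r ≤ ψ (x k) := by
        rw [hψdef]
        rw [show Ψ (x k) = (((Ψ (x k)).toReal : ℝ) : EReal) from (EReal.coe_toReal hfin (hΨbot _)).symm] at hr1
        exact_mod_cast hr1.le
      have hΦ1 : |Φ (x k) - Φ e| < ε/2 := by
        have := hδ' (show dist (x k) e < δ' by rw [Real.dist_eq]; exact hk1.trans_le (min_le_right _ _))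
        rwa [Real.dist_eq] at this
      have hw1 : Φ (x k) + ψ (x k) - mR < ε/2 := by rw [← hwdef]; exact hk2
      have habs := abs_lt.1 hΦ1
      linarith [habs.1, habs.2]
    have hfin : Ψ e ≠ ⊤ := by
      intro h
      have := key (mR - Φ e + 1) (by rw [h]; exact EReal.coe_lt_top _)
      linarith
    refine ⟨hfin, ?_⟩
    by_contra hgt
    push_neg at hgt
    have hr : ((ψ e - (Φ e + ψ e - mR)/2 : ℝ) : EReal) < Ψ e := by
      rw [show Ψ e = ((ψ e : ℝ) : EReal) from by rw [hψdef]; exact (EReal.coe_toReal hfin (hΨbot _)).symm]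
      exact_mod_cast (by linarith : ψ e - (Φ e + ψ e - mR)/2 < ψ e)
    have := key _ hr
    linarith
  rcases eq_or_lt_of_le hcd with heq | hlt
  · -- convergence
    refine ⟨c, ?_, ?_⟩
    · obtain ⟨hcfin, hcle⟩ := hlimS c hfreqc
      intro u
      calc Θ c = ((Φ c + ψ c : ℝ) : EReal) := hΘcoe c hcfin
        _ ≤ ((mR : ℝ) : EReal) := by exact_mod_cast hcle
        _ = ((Φ zs + ψ zs : ℝ) : EReal) := by rw [hmRdef]
        _ = Θ zs := (hΘcoe zs hzfin).symm
        _ ≤ Θ u := hzs u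
    · exact tendsto_of_liminf_eq_limsup hcdef.symm (heq ▸ hddef.symm) hble hbge
  · exfalso
    obtain ⟨hcfin, hcle⟩ := hlimS c hfreqc
    obtain ⟨hdfin, hdle⟩ := hlimS dd hfreqd
    have hcval : Φ c + ψ c = mR := le_antisymm hcle (hmin c hcfin)
    have hdval : Φ dd + ψ dd = mR := le_antisymm hdle (hmin dd hdfin)
    obtain ⟨hFanti, -⟩ := hEanti c hcfin hcval
    obtain ⟨hGanti, -⟩ := hEanti dd hdfin hdval
    -- convergence of the energies
    obtain ⟨lF, hlF⟩ : ∃ lF, Tendsto (fun n => E c (n+2)) atTop (nhds lF) :=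
      ⟨_, tendsto_atTop_ciInf hFanti ⟨0, by rintro r ⟨n, rfl⟩; exact hEnn c (n+2) (by omega)⟩⟩
    obtain ⟨lG, hlG⟩ : ∃ lG, Tendsto (fun n => E dd (n+2)) atTop (nhds lG) :=
      ⟨_, tendsto_atTop_ciInf hGanti ⟨0, by rintro r ⟨n, rfl⟩; exact hEnn dd (n+2) (by omega)⟩⟩
    set p : ℝ := ((lF - lG)/(dd - c) + c + dd)/2 with hpdef
    have hAt : Tendsto A atTop (nhds p) := by
      have hdiff : Tendsto (fun n => E c (n+2) - E dd (n+2)) atTop (nhds (lF - lG)) := hlF.sub hlG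
      have hne : dd - c ≠ 0 := by intro h; apply absurd hlt; rw [show c = dd by linarith [sub_eq_zero.1 h]]; exact lt_irrefl _
      have heq : ∀ n : ℕ, A (n+2) = ((E c (n+2) - E dd (n+2))/(dd - c) + c + dd)/2 := by
        intro n
        rw [hEdef, hEdef]
        field_simp
        ring
      have h4 : Tendsto (fun n => ((E c (n+2) - E dd (n+2))/(dd - c) + c + dd)/2) atTop (nhds p) := by
        rw [hpdef]
        exact (((hdiff.div_const (dd - c)).add_const c).add_const dd).div_const 2
      have h5 : Tendsto (fun n => A (n+2)) atTop (nhds p) := h4.congr (fun n => (heq n).symm)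
      exact (tendsto_add_atTop_iff_nat 2).1 h5
    have hcross_up : ∀ q : ℝ, c < q → q < dd → q ≤ p := by
      intro q hq1 hq2
      have hfreq : ∃ᶠ k in atTop, q ≤ A k := by
        rw [frequently_atTop]
        intro N
        have h1 : ∃ᶠ k in atTop, x k < q :=
          frequently_lt_of_liminf_lt hble.isCoboundedUnder_ge (by rw [← hcdef]; exact hq1)
        have h2 : ∃ᶠ k in atTop, q < x k :=
          frequently_lt_of_lt_limsup hbge.isCoboundedUnder_le (by rw [← hddef]; exact hq2)
        obtain ⟨n, hnN, hn⟩ := (frequently_atTop.1 h1) (max N 4)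
        obtain ⟨m, hmn, hm⟩ := (frequently_atTop.1 h2) (n+1)
        have hTne : ∃ j, n < j ∧ q < x j := ⟨m, by omega, hm⟩
        set T := {j : ℕ | n < j ∧ q < x j} with hT
        have hiT : sInf T ∈ T := Nat.sInf_mem hTne
        set i := sInf T with hidef
        have hin : n < i := hiT.1
        have hqi : q < x i := hiT.2
        have hprev : x (i-1) ≤ q := by
          by_cases hni : i - 1 = n
          · rw [hni]; exact le_of_lt hn
          · have h3 : n < i - 1 := by omega
            have h4 : i - 1 ∉ T := Nat.notMem_of_lt_sInf (by omega)
            rw [hT] at h4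
            simp only [Set.mem_setOf_eq, not_and, not_lt] at h4
            exact h4 h3
        refine ⟨i, by omega, ?_⟩
        have hi4 : 4 ≤ i := by omega
        have hi4R : (4:ℝ) ≤ (i:ℝ) := by exact_mod_cast hi4
        rw [hAdef]
        have h5 : 0 ≤ ((i:ℝ)-3)/2 * (x i - x (i-1)) :=
          mul_nonneg (by linarith) (by linarith)
        linarith
      have h6 : q ≤ limsup A atTop := le_limsup_of_frequently_le hfreq hAt.isBoundedUnder_le
      rwa [hAt.limsup_eq] at h6
    have hcross_down : ∀ q : ℝ, c < q → q < dd → p ≤ q := by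
      intro q hq1 hq2
      have hfreq : ∃ᶠ k in atTop, A k ≤ q := by
        rw [frequently_atTop]
        intro N
        have h1 : ∃ᶠ k in atTop, q < x k :=
          frequently_lt_of_lt_limsup hbge.isCoboundedUnder_le (by rw [← hddef]; exact hq2)
        have h2 : ∃ᶠ k in atTop, x k < q :=
          frequently_lt_of_liminf_lt hble.isCoboundedUnder_ge (by rw [← hcdef]; exact hq1)
        obtain ⟨n, hnN, hn⟩ := (frequently_atTop.1 h1) (max N 4)
        obtain ⟨m, hmn, hm⟩ := (frequently_atTop.1 h2) (n+1)
        have hTne : ∃ j, n < j ∧ x j < q := ⟨m, by omega, hm⟩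
        set T := {j : ℕ | n < j ∧ x j < q} with hT
        have hiT : sInf T ∈ T := Nat.sInf_mem hTne
        set i := sInf T with hidef
        have hin : n < i := hiT.1
        have hqi : x i < q := hiT.2
        have hprev : q ≤ x (i-1) := by
          by_cases hni : i - 1 = n
          · rw [hni]; exact le_of_lt hn
          · have h3 : n < i - 1 := by omega
            have h4 : i - 1 ∉ T := Nat.notMem_of_lt_sInf (by omega)
            rw [hT] at h4
            simp only [Set.mem_setOf_eq, not_and, not_lt] at h4
            exact h4 h3
        refine ⟨i, by omega, ?_⟩
        have hi4 : 4 ≤ i := by omega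
        have hi4R : (4:ℝ) ≤ (i:ℝ) := by exact_mod_cast hi4
        rw [hAdef]
        have h5 : ((i:ℝ)-3)/2 * (x i - x (i-1)) ≤ 0 :=
          mul_nonpos_of_nonneg_of_nonpos (by linarith) (by linarith)
        linarith
      have h6 : liminf A atTop ≤ q := liminf_le_of_frequently_le hfreq hAt.isBoundedUnder_ge
      rwa [hAt.liminf_eq] at h6
    have h1b := hcross_down ((2*c + dd)/3) (by linarith) (by linarith)
    have h2a := hcross_up ((c + 2*dd)/3) (by linarith) (by linarith)
    linarith
end

section
/- (Perturbed dynamics.) Let α > 0, set p = min(1, α/3), and suppose the perturbation g satisfies ∫_{t₀}^{+∞} t^p ‖g(t)‖ dt < +∞. Then along any twice continuously differentiable solution x of the perturbed equation ẍ(t) + (α/t)ẋ(t) + ∇Φ(x(t)) = g(t) on [t₀, +∞), the values satisfy Φ(x(t)) − inf Φ = O(1/t^{2p}) as t → +∞, i.e. there exists M ≥ 0 with Φ(x(t)) − inf Φ ≤ M/t^{2p} for all t ≥ t₀. -/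
/-!
With `λ = 2p` and `ξ = 2p(1 + α - 4p)`, consider the Lyapunov function
`E(t) = t^{2p} (Φ(x) - Φ(x⋆)) + ½‖t^p (ẋ + (λ/t)(x - x⋆))‖² + (ξ/2) t^{2p-2} ‖x - x⋆‖²`.
Differentiating along the equation, the cross terms cancel thanks to the choice of `ξ`, the
terms in `‖x - x⋆‖²` and `‖ẋ‖²` have the signs of `p - 1` and `3p - α`, and convexity
controls `Φ(x) - Φ(x⋆) - ⟪∇Φ(x), x - x⋆⟫`; what remains is
`Ė ≤ t^p ‖g‖ · ‖t^p (ẋ + (λ/t)(x - x⋆))‖ ≤ 2 t^p ‖g‖ √E`.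
So `√(E + 1)` increases by at most `∫ t^p ‖g‖ < ∞`, `E` is bounded, and
`t^{2p} (Φ(x(t)) - Φ(x⋆)) ≤ E(t)`.
-/

open RealInnerProductSpace MeasureTheory Set

/-- The `+ 1` keeps the square root differentiable where `W` vanishes. -/
theorem sqrt_add_one_sub_le_integral {W k : ℝ → ℝ} {a b : ℝ} (hab : a ≤ b)
    (hW : ∀ s ∈ Icc a b, DifferentiableAt ℝ W s) (hW0 : ∀ s ∈ Icc a b, 0 ≤ W s)
    (hk : ∀ s ∈ Icc a b, 0 ≤ k s) (hW' : ∀ s ∈ Icc a b, deriv W s ≤ 2 * k s * √(W s))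
    (hkint : IntegrableOn k (Icc a b)) :
    √(W b + 1) - √(W a + 1) ≤ ∫ s in a..b, k s := by
  have hderiv : ∀ s ∈ Icc a b,
      HasDerivAt (fun s => √(W s + 1)) (deriv W s / (2 * √(W s + 1))) s := fun s hs => by
    simpa [div_eq_mul_inv] using ((hW s hs).hasDerivAt.add_const 1).sqrt (by linarith [hW0 s hs])
  refine intervalIntegral.sub_le_integral_of_hasDeriv_right_of_le hab
    (fun s hs => (hderiv s hs).continuousAt.continuousWithinAt)
    (fun s hs => (hderiv s (Ioo_subset_Icc_self hs)).hasDerivWithinAt) hkint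
    (fun s hs => ?_)
  replace hs := Ioo_subset_Icc_self hs
  have hk0 := hk s hs
  have hpos : 0 < √(W s + 1) := Real.sqrt_pos.mpr (by linarith [hW0 s hs])
  rw [div_le_iff₀ (by positivity)]
  calc deriv W s ≤ 2 * k s * √(W s) := hW' s hs
    _ ≤ 2 * k s * √(W s + 1) := by gcongr; linarith
    _ = k s * (2 * √(W s + 1)) := by ring

section

variable {H : Type*} [NormedAddCommGroup H] [InnerProductSpace ℝ H]

theorem HasGradientAt.hasDerivAt_comp [CompleteSpace H] {f : H → ℝ} {G : H} {γ : ℝ → H}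
    {v : H} {t : ℝ} (hf : HasGradientAt f G (γ t)) (hγ : HasDerivAt γ v t) :
    HasDerivAt (fun s => f (γ s)) ⟪G, v⟫ t :=
  (hasGradientAt_iff_hasFDerivAt.mp hf).comp_hasDerivAt t hγ

theorem ConvexOn.sub_le_inner_of_hasGradientAt [CompleteSpace H] {f : H → ℝ}
    (hf : ConvexOn ℝ univ f) {x G : H} (hG : HasGradientAt f G x) (y : H) :
    f x - f y ≤ ⟪G, x - y⟫ := by
  have hline : HasDerivAt (fun s : ℝ => f (AffineMap.lineMap x y s)) ⟪G, y - x⟫ 0 :=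
    (by simpa using hG : HasGradientAt f G (AffineMap.lineMap x y (0 : ℝ))).hasDerivAt_comp
      AffineMap.hasDerivAt_lineMap
  have := (hf.comp_affineMap (AffineMap.lineMap x y)).le_slope_of_hasDerivAt (mem_univ 0)
    (mem_univ 1) zero_lt_one hline
  simp only [slope_def_field, Function.comp_apply, AffineMap.lineMap_apply_one,
    AffineMap.lineMap_apply_zero, sub_zero, div_one] at this
  rw [← neg_sub y x, inner_neg_right]
  linarith

/-- The coefficient `p (1 + α - 4p)` is the one for which the terms in `⟪y - x⋆, v⟫` cancel in
the derivative along the flow (`hasDerivAt_energy`). -/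
noncomputable def energy (Φ : H → ℝ) (xstar : H) (α p t : ℝ) (y v : H) : ℝ :=
  Φ y - Φ xstar + ‖(2 * p / t) • (y - xstar) + v‖ ^ 2 / 2
    + p * (1 + α - 4 * p) * ‖y - xstar‖ ^ 2 / t ^ 2

noncomputable def lyapunov (Φ : H → ℝ) (xstar : H) (α p : ℝ) (x v : ℝ → H) (t : ℝ) : ℝ :=
  t ^ (2 * p) * energy Φ xstar α p t (x t) (v t)

variable {Φ : H → ℝ} {xstar : H} {α p : ℝ}

theorem sub_le_energy_and_norm_sq_le_energy (hmin : ∀ y, Φ xstar ≤ Φ y) (hp : 0 ≤ p)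
    (hp4 : 4 * p ≤ 1 + α) (t : ℝ) (y v : H) :
    Φ y - Φ xstar ≤ energy Φ xstar α p t y v ∧
      ‖(2 * p / t) • (y - xstar) + v‖ ^ 2 / 2 ≤ energy Φ xstar α p t y v := by
  have h₁ := sub_nonneg.mpr (hmin y)
  have h₂ : 0 ≤ ‖(2 * p / t) • (y - xstar) + v‖ ^ 2 / 2 := by positivity
  have h₃ : 0 ≤ p * (1 + α - 4 * p) * ‖y - xstar‖ ^ 2 / t ^ 2 :=
    div_nonneg (mul_nonneg (mul_nonneg hp (by linarith)) (sq_nonneg _)) (sq_nonneg _)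
  constructor <;> (unfold energy; linarith)

theorem hasDerivAt_energy [CompleteSpace H] {x v : ℝ → H} {t : ℝ} {a G g : H} (ht : t ≠ 0)
    (hx : HasDerivAt x (v t) t) (hv : HasDerivAt v a t) (hΦ : HasGradientAt Φ G (x t))
    (hode : a + (α / t) • v t + G = g) :
    HasDerivAt (fun s => energy Φ xstar α p s (x s) (v s))
      (-(2 * p / t) * energy Φ xstar α p t (x t) (v t)
        + (2 * p * (p - 1) * (1 + α - 2 * p) / t ^ 3 * ‖x t - xstar‖ ^ 2
          + (3 * p - α) / t * ‖v t‖ ^ 2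
          + 2 * p / t * (Φ (x t) - Φ xstar - ⟪G, x t - xstar⟫)
          + ⟪(2 * p / t) • (x t - xstar) + v t, g⟫)) t := by
  have hX : HasDerivAt (fun s => x s - xstar) (v t) t := hx.sub_const xstar
  have hcoef : HasDerivAt (fun s => 2 * p / s) (-(2 * p) / t ^ 2) t := by
    simpa [div_eq_mul_inv] using (hasDerivAt_inv ht).const_mul (2 * p)
  have hw : HasDerivAt (fun s => (2 * p / s) • (x s - xstar) + v s)
      ((2 * p / t) • v t + (-(2 * p) / t ^ 2) • (x t - xstar) + a) t :=
    (hcoef.smul hX).add hv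
  have h := (((hΦ.hasDerivAt_comp hx).sub_const (Φ xstar)).add (hw.norm_sq.div_const 2)).add
    ((hX.norm_sq.const_mul (p * (1 + α - 4 * p))).div (hasDerivAt_pow 2 t) (pow_ne_zero 2 ht))
  obtain rfl : a = g - (α / t) • v t - G := by rw [← hode]; abel
  refine h.congr_deriv ?_
  simp only [energy]
  set X := x t - xstar
  set V := v t
  simp only [← real_inner_self_eq_norm_sq, inner_add_left, inner_add_right, inner_sub_right,
    real_inner_smul_left, real_inner_smul_right, real_inner_comm X V, real_inner_comm X G,
    real_inner_comm V G]
  field_simp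
  ring

theorem hasDerivAt_lyapunov [CompleteSpace H] {x v : ℝ → H} {t : ℝ} {a G g : H} (ht : 0 < t)
    (hx : HasDerivAt x (v t) t) (hv : HasDerivAt v a t) (hΦ : HasGradientAt Φ G (x t))
    (hode : a + (α / t) • v t + G = g) :
    HasDerivAt (lyapunov Φ xstar α p x v)
      (t ^ (2 * p) * (2 * p * (p - 1) * (1 + α - 2 * p) / t ^ 3 * ‖x t - xstar‖ ^ 2
          + (3 * p - α) / t * ‖v t‖ ^ 2
          + 2 * p / t * (Φ (x t) - Φ xstar - ⟪G, x t - xstar⟫)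
          + ⟪(2 * p / t) • (x t - xstar) + v t, g⟫)) t := by
  refine ((Real.hasDerivAt_rpow_const (Or.inl ht.ne')).mul
    (hasDerivAt_energy ht.ne' hx hv hΦ hode)).congr_deriv ?_
  rw [Real.rpow_sub_one ht.ne']
  field_simp
  ring

theorem rpow_mul_sub_le_lyapunov (hmin : ∀ y, Φ xstar ≤ Φ y) (hp : 0 ≤ p)
    (hp4 : 4 * p ≤ 1 + α) (x v : ℝ → H) {t : ℝ} (ht : 0 < t) :
    t ^ (2 * p) * (Φ (x t) - Φ xstar) ≤ lyapunov Φ xstar α p x v t :=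
  mul_le_mul_of_nonneg_left (sub_le_energy_and_norm_sq_le_energy hmin hp hp4 t _ _).1
    (Real.rpow_nonneg ht.le _)

theorem lyapunov_nonneg (hmin : ∀ y, Φ xstar ≤ Φ y) (hp : 0 ≤ p) (hp4 : 4 * p ≤ 1 + α)
    (x v : ℝ → H) {t : ℝ} (ht : 0 < t) : 0 ≤ lyapunov Φ xstar α p x v t :=
  (mul_nonneg (Real.rpow_nonneg ht.le _) (sub_nonneg.mpr (hmin _))).trans
    (rpow_mul_sub_le_lyapunov hmin hp hp4 x v ht)

theorem rpow_mul_norm_le_two_sqrt_lyapunov (hmin : ∀ y, Φ xstar ≤ Φ y) (hp : 0 ≤ p)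
    (hp4 : 4 * p ≤ 1 + α) (x v : ℝ → H) {t : ℝ} (ht : 0 < t) :
    t ^ p * ‖(2 * p / t) • (x t - xstar) + v t‖ ≤ 2 * √(lyapunov Φ xstar α p x v t) := by
  have hE := (sub_le_energy_and_norm_sq_le_energy hmin hp hp4 t (x t) (v t)).2
  have hrpow : (t ^ p) ^ 2 = t ^ (2 * p) := by
    rw [← Real.rpow_mul_natCast ht.le, mul_comm]; norm_num
  refine le_of_pow_le_pow_left₀ two_ne_zero (by positivity) ?_
  rw [mul_pow, mul_pow, hrpow, Real.sq_sqrt (lyapunov_nonneg hmin hp hp4 x v ht), lyapunov]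
  have := Real.rpow_nonneg ht.le (2 * p)
  nlinarith

theorem deriv_lyapunov_le [CompleteSpace H] (hconv : ConvexOn ℝ univ Φ) (hp : 0 ≤ p)
    (hp1 : p ≤ 1) (hpα : 3 * p ≤ α) {x v : ℝ → H} {t : ℝ} {a G g : H} (ht : 0 < t)
    (hx : HasDerivAt x (v t) t) (hv : HasDerivAt v a t) (hΦ : HasGradientAt Φ G (x t))
    (hode : a + (α / t) • v t + G = g) :
    deriv (lyapunov Φ xstar α p x v) t
      ≤ t ^ (2 * p) * (‖(2 * p / t) • (x t - xstar) + v t‖ * ‖g‖) := by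
  rw [(hasDerivAt_lyapunov ht hx hv hΦ hode).deriv]
  gcongr ?_ * ?_
  have h₁ : 2 * p * (p - 1) * (1 + α - 2 * p) / t ^ 3 * ‖x t - xstar‖ ^ 2 ≤ 0 :=
    mul_nonpos_of_nonpos_of_nonneg (div_nonpos_of_nonpos_of_nonneg
      (mul_nonpos_of_nonpos_of_nonneg (mul_nonpos_of_nonneg_of_nonpos (by linarith) (by linarith))
        (by linarith)) (by positivity)) (sq_nonneg _)
  have h₂ : (3 * p - α) / t * ‖v t‖ ^ 2 ≤ 0 :=
    mul_nonpos_of_nonpos_of_nonneg (div_nonpos_of_nonpos_of_nonneg (by linarith) ht.le)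
      (sq_nonneg _)
  have h₃ : 2 * p / t * (Φ (x t) - Φ xstar - ⟪G, x t - xstar⟫) ≤ 0 :=
    mul_nonpos_of_nonneg_of_nonpos (by positivity)
      (sub_nonpos.mpr (hconv.sub_le_inner_of_hasGradientAt hΦ xstar))
  linarith [real_inner_le_norm ((2 * p / t) • (x t - xstar) + v t) g]

theorem sqrt_lyapunov_add_one_le [CompleteSpace H] (hconv : ConvexOn ℝ univ Φ)
    (hmin : ∀ y, Φ xstar ≤ Φ y) (hΦ : Differentiable ℝ Φ) (hp : 0 ≤ p) (hp1 : p ≤ 1)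
    (hpα : 3 * p ≤ α) {x v a g : ℝ → H} {t₀ : ℝ} (ht₀ : 0 < t₀)
    (hx : ∀ t, t₀ ≤ t → HasDerivAt x (v t) t) (hv : ∀ t, t₀ ≤ t → HasDerivAt v (a t) t)
    (hode : ∀ t, t₀ ≤ t → a t + (α / t) • v t + gradient Φ (x t) = g t)
    (hint : IntegrableOn (fun t => t ^ p * ‖g t‖) (Ioi t₀)) {t : ℝ} (ht : t₀ ≤ t) :
    √(lyapunov Φ xstar α p x v t + 1)
      ≤ √(lyapunov Φ xstar α p x v t₀ + 1) + ∫ s in Ioi t₀, s ^ p * ‖g s‖ := by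
  have hp4 : 4 * p ≤ 1 + α := by linarith
  have hpos : ∀ s ∈ Icc t₀ t, 0 < s := fun s hs => ht₀.trans_le hs.1
  have hk : ∀ s ∈ Icc t₀ t, 0 ≤ s ^ p * ‖g s‖ := fun s hs =>
    mul_nonneg (Real.rpow_nonneg (hpos s hs).le _) (norm_nonneg _)
  have hstep := sqrt_add_one_sub_le_integral ht
    (fun s hs => (hasDerivAt_lyapunov (hpos s hs) (hx s hs.1) (hv s hs.1)
      (hΦ (x s)).hasGradientAt (hode s hs.1)).differentiableAt)
    (fun s hs => lyapunov_nonneg hmin hp hp4 x v (hpos s hs)) hk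
    (fun s hs => (deriv_lyapunov_le hconv hp hp1 hpα (hpos s hs) (hx s hs.1) (hv s hs.1)
      (hΦ (x s)).hasGradientAt (hode s hs.1)).trans ?_)
    ((integrableOn_Icc_iff_integrableOn_Ioc).mpr (hint.mono_set Ioc_subset_Ioi_self))
  · have htail : ∫ s in t₀..t, s ^ p * ‖g s‖ ≤ ∫ s in Ioi t₀, s ^ p * ‖g s‖ := by
      rw [intervalIntegral.integral_of_le ht]
      refine setIntegral_mono_set hint ?_ Ioc_subset_Ioi_self.eventuallyLE
      filter_upwards [ae_restrict_mem measurableSet_Ioi] with s hs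
      exact mul_nonneg (Real.rpow_nonneg (ht₀.trans hs).le _) (norm_nonneg _)
    linarith
  · have hw := rpow_mul_norm_le_two_sqrt_lyapunov hmin hp hp4 x v (hpos s hs)
    have hrpow : s ^ (2 * p) = s ^ p * s ^ p := by
      rw [two_mul, Real.rpow_add (hpos s hs)]
    calc s ^ (2 * p) * (‖(2 * p / s) • (x s - xstar) + v s‖ * ‖g s‖)
        = s ^ p * ‖g s‖ * (s ^ p * ‖(2 * p / s) • (x s - xstar) + v s‖) := by rw [hrpow]; ring
      _ ≤ s ^ p * ‖g s‖ * (2 * √(lyapunov Φ xstar α p x v s)) := by gcongr; exact hk s hs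
      _ = 2 * (s ^ p * ‖g s‖) * √(lyapunov Φ xstar α p x v s) := by ring

end

theorem stmt_19_general
    {H : Type*} [NormedAddCommGroup H] [InnerProductSpace ℝ H] [CompleteSpace H]
    (Φ : H → ℝ) (hΦconv : ConvexOn ℝ Set.univ Φ) (hΦC1 : ContDiff ℝ 1 Φ)
    (xstar : H) (hxstar : ∀ y : H, Φ xstar ≤ Φ y)
    (α t₀ : ℝ) (hα : 0 < α) (ht₀ : 0 < t₀)
    (g : ℝ → H)
    (p : ℝ) (hp : p = min 1 (α / 3))
    (hint : MeasureTheory.IntegrableOn (fun t : ℝ => t ^ p * ‖g t‖) (Set.Ioi t₀))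
    (x : ℝ → H) (hx : ContDiff ℝ 2 x)
    (hode : ∀ t : ℝ, t₀ ≤ t →
      deriv (deriv x) t + (α / t) • deriv x t + gradient Φ (x t) = g t) :
    ∃ M : ℝ, 0 ≤ M ∧ ∀ t : ℝ, t₀ ≤ t → Φ (x t) - Φ xstar ≤ M / t ^ (2 * p) := by
  have hp0 : 0 ≤ p := by rw [hp]; exact le_min zero_le_one (by positivity)
  have hp1 : p ≤ 1 := by rw [hp]; exact min_le_left _ _
  have hpα : 3 * p ≤ α := by rw [hp]; linarith [min_le_right 1 (α / 3)]
  have hp4 : 4 * p ≤ 1 + α := by linarith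
  have hx' : ∀ t, HasDerivAt x (deriv x t) t := fun t =>
    (hx.differentiable (by norm_num) t).hasDerivAt
  have hx'' : ∀ t, HasDerivAt (deriv x) (deriv (deriv x) t) t := fun t =>
    ((by simpa using hx.differentiable_iteratedDeriv 1 (by norm_num) :
      Differentiable ℝ (deriv x)) t).hasDerivAt
  set L := lyapunov Φ xstar α p x (deriv x)
  refine ⟨(√(L t₀ + 1) + ∫ s in Ioi t₀, s ^ p * ‖g s‖) ^ 2, by positivity, fun t ht => ?_⟩
  have ht0 : 0 < t := ht₀.trans_le ht
  have hL := lyapunov_nonneg hxstar hp0 hp4 x (deriv x) ht0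
  rw [le_div_iff₀ (by positivity), mul_comm]
  calc t ^ (2 * p) * (Φ (x t) - Φ xstar) ≤ L t :=
        rpow_mul_sub_le_lyapunov hxstar hp0 hp4 x (deriv x) ht0
    _ ≤ √(L t + 1) ^ 2 := by rw [Real.sq_sqrt (by linarith)]; linarith
    _ ≤ _ := by
        gcongr
        exact sqrt_lyapunov_add_one_le hΦconv hxstar (hΦC1.differentiable one_ne_zero) hp0 hp1
          hpα ht₀ (fun t _ => hx' t) (fun t _ => hx'' t) hode hint ht

/-- perturbed dynamics. Let `p = min(1, α/3)` and suppose
`∫_{t₀}^∞ t^p ‖g(t)‖ dt < ∞`. Then along any solution of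
`ẍ(t) + (α/t)ẋ(t) + ∇Φ(x(t)) = g(t)` one has `Φ(x(t)) - inf Φ = O(1/t^{2p})`. -/
theorem stmt_19
    {H : Type*} [NormedAddCommGroup H] [InnerProductSpace ℝ H] [CompleteSpace H]
    (Φ : H → ℝ) (hΦconv : ConvexOn ℝ Set.univ Φ) (hΦC1 : ContDiff ℝ 1 Φ)
    (xstar : H) (hxstar : ∀ y : H, Φ xstar ≤ Φ y)
    (α t₀ : ℝ) (hα : 0 < α) (ht₀ : 0 < t₀)
    (g : ℝ → H) (hgloc : MeasureTheory.LocallyIntegrableOn g (Set.Ici t₀))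
    (p : ℝ) (hp : p = min 1 (α / 3))
    (hint : MeasureTheory.IntegrableOn (fun t : ℝ => t ^ p * ‖g t‖) (Set.Ioi t₀))
    (x : ℝ → H) (hx : ContDiff ℝ 2 x)
    (hode : ∀ t : ℝ, t₀ ≤ t →
      deriv (deriv x) t + (α / t) • deriv x t + gradient Φ (x t) = g t) :
    ∃ M : ℝ, 0 ≤ M ∧ ∀ t : ℝ, t₀ ≤ t → Φ (x t) - Φ xstar ≤ M / t ^ (2 * p) :=
  stmt_19_general Φ hΦconv hΦC1 xstar hxstar α t₀ hα ht₀ g p hp hint x hx hode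
end
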